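/- In a maximum projective arrangement of a rooted tree (n ≥ 2), the root occupies one end of the arrangement (position 1 or position n). -/

import Mathlib

open SimpleGraph

attribute [local instance] Classical.propDecidable

/-- Length of an edge (as an unordered pair) in an arrangement. -/
noncomputable def edgeLen {V : Type*} [Fintype V] (π : V ≃ Fin (Fintype.card V)) :
    Sym2 V → ℕ :=
  Sym2.lift ⟨fun u v => ((π u : ℤ) - (π v : ℤ)).natAbs, fun u v => by
    simp only []; omega⟩

/-- Cost of a linear arrangement: sum of edge lengths. -/
noncomputable def cost {V : Type*} [Fintype V] (G : SimpleGraph V)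
    (π : V ≃ Fin (Fintype.card V)) : ℕ :=
  ∑ᶠ e ∈ G.edgeSet, edgeLen π e

/-- An arrangement is planar if no two edges cross. -/
def Planar {V : Type*} [Fintype V] (G : SimpleGraph V)
    (π : V ≃ Fin (Fintype.card V)) : Prop :=
  ∀ ⦃s t u v : V⦄, G.Adj s t → G.Adj u v → π s < π t → π u < π v → π s < π u →
    ¬(π u < π t ∧ π t < π v)

/-- An arrangement of a tree rooted at `r` is projective if it is planar and no
edge covers the root. -/
def Projective {V : Type*} [Fintype V] (G : SimpleGraph V) (r : V)
    (π : V ≃ Fin (Fintype.card V)) : Prop :=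
  Planar G π ∧ ∀ ⦃u v : V⦄, G.Adj u v → ¬(π u < π r ∧ π r < π v)

noncomputable def maxCost {V : Type*} [Fintype V] (G : SimpleGraph V) : ℕ :=
  sSup {c | ∃ π : V ≃ Fin (Fintype.card V), cost G π = c}

noncomputable def maxPlanar {V : Type*} [Fintype V] (G : SimpleGraph V) : ℕ :=
  sSup {c | ∃ π : V ≃ Fin (Fintype.card V), Planar G π ∧ cost G π = c}

noncomputable def maxProj {V : Type*} [Fintype V] (G : SimpleGraph V) (r : V) : ℕ :=
  sSup {c | ∃ π : V ≃ Fin (Fintype.card V), Projective G r π ∧ cost G π = c}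

/-- `compSize G u v` : the number of vertices of the connected component of `v`
after removing the edge `uv` (this is `n_u(v)`). -/
noncomputable def compSize {V : Type*} [Fintype V] (G : SimpleGraph V) (u v : V) : ℕ :=
  Nat.card {y : V // (G.deleteEdges {s(u, v)}).Reachable v y}

/-- The star graph: the vertex with value `0` (the hub) is adjacent to all others. -/
def starGraph (n : ℕ) : SimpleGraph (Fin n) :=
  SimpleGraph.fromRel (fun i _ => (i : ℕ) = 0)

/-!
Let `k = π r` with `0 < k < n - 1`. Since no edge covers the root, every edge lies inside
`[0, k]` or inside `[k, n - 1]`. Reversing the block `[0, k]` moves the root to position `0`,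
keeps the arrangement projective and does not shorten any edge. By connectivity the root has
a neighbour to its right, and that edge gets longer by `k`, contradicting maximality.
-/

section RevPrefix

variable {m : ℕ}

def revPrefix (k : Fin m) : Equiv.Perm (Fin m) :=
  Function.Involutive.toPerm (fun i => if i ≤ k then ⟨k - i, by omega⟩ else i) (fun i => by
    ext
    dsimp only
    split_ifs <;> simp only [Fin.le_def] at * <;> omega)

theorem revPrefix_val (k i : Fin m) :
    (revPrefix k i : ℕ) = if (i : ℕ) ≤ k then (k : ℕ) - i else i := by
  simp only [revPrefix, Function.Involutive.coe_toPerm, Fin.le_def]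
  split_ifs <;> rfl

theorem revPrefix_self (k : Fin m) : (revPrefix k k : ℕ) = 0 := by
  simp [revPrefix_val]

end RevPrefix

variable {V : Type*} [Fintype V] {G : SimpleGraph V} {π σ : V ≃ Fin (Fintype.card V)}

theorem edgeLen_mk (π : V ≃ Fin (Fintype.card V)) (u v : V) :
    edgeLen π s(u, v) = ((π u : ℤ) - (π v : ℤ)).natAbs := rfl

theorem cost_lt_cost_of_edgeLen_le (hle : ∀ e ∈ G.edgeSet, edgeLen π e ≤ edgeLen σ e)
    (hlt : ∃ e ∈ G.edgeSet, edgeLen π e < edgeLen σ e) : cost G π < cost G σ := by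
  simp only [cost, ← coe_edgeFinset, finsum_mem_coe_finset]
  simp only [← mem_edgeFinset] at hle hlt
  exact Finset.sum_lt_sum hle hlt

theorem Planar.not_lt_lt_lt (hP : Planar G π) {s t u v : V} (hst : G.Adj s t)
    (huv : G.Adj u v) :
    ¬((π s : ℕ) < π u ∧ (π u : ℕ) < π t ∧ (π t : ℕ) < π v) := by
  rintro ⟨h₁, h₂, h₃⟩
  exact hP hst huv (Fin.lt_def.mpr (h₁.trans h₂)) (Fin.lt_def.mpr (h₂.trans h₃))
    (Fin.lt_def.mpr h₁) ⟨Fin.lt_def.mpr h₂, Fin.lt_def.mpr h₃⟩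

def NoEdgeCovers (G : SimpleGraph V) (π : V ≃ Fin (Fintype.card V))
    (k : Fin (Fintype.card V)) : Prop :=
  ∀ ⦃u v : V⦄, G.Adj u v → ¬(π u < k ∧ k < π v)

namespace NoEdgeCovers

variable {k : Fin (Fintype.card V)}

theorem side (h : NoEdgeCovers G π k) {u v : V} (huv : G.Adj u v) :
    ((π u : ℕ) ≤ k ∧ (π v : ℕ) ≤ k) ∨ ((k : ℕ) ≤ π u ∧ (k : ℕ) ≤ π v) := by
  have h₁ := h huv
  have h₂ := h huv.symm
  simp only [not_and, Fin.lt_def, not_lt] at h₁ h₂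
  omega

theorem planar_trans_revPrefix (h : NoEdgeCovers G π k) (hP : Planar G π) :
    Planar G (π.trans (revPrefix k)) := by
  intro s t u v hst huv h₁ h₂ h₃ ⟨h₄, h₅⟩
  simp only [Equiv.trans_apply, Fin.lt_def, revPrefix_val] at h₁ h₂ h₃ h₄ h₅
  -- Each edge lies in `[0, k]` or in `[k, m)`, and the reflection only reverses the order
  -- inside `[0, k]`, so a crossing after it is a crossing before it in some orientation.
  have := h.side hst
  have := h.side huv
  have := hP.not_lt_lt_lt hst huv
  have := hP.not_lt_lt_lt hst.symm huv
  have := hP.not_lt_lt_lt hst huv.symm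
  have := hP.not_lt_lt_lt hst.symm huv.symm
  have := hP.not_lt_lt_lt huv hst
  have := hP.not_lt_lt_lt huv.symm hst
  have := hP.not_lt_lt_lt huv hst.symm
  have := hP.not_lt_lt_lt huv.symm hst.symm
  split_ifs at h₁ h₂ h₃ h₄ h₅ <;> omega

theorem edgeLen_le_trans_revPrefix (h : NoEdgeCovers G π k) {e : Sym2 V}
    (he : e ∈ G.edgeSet) : edgeLen π e ≤ edgeLen (π.trans (revPrefix k)) e := by
  induction e using Sym2.ind with
  | _ u v =>
    have := h.side (show G.Adj u v from he)
    simp only [edgeLen_mk, Equiv.trans_apply, revPrefix_val]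
    split_ifs <;> omega

theorem exists_adj_gt (h : NoEdgeCovers G π k) (hG : G.Connected) {r w : V} (hr : π r = k)
    (hw : k < π w) : ∃ v, G.Adj r v ∧ k < π v := by
  obtain ⟨d, -, hd, hd'⟩ :=
    (hG.preconnected w r).some.exists_boundary_dart {x | k < π x} hw (by simp [hr])
  have hk : π d.snd = k := le_antisymm (not_lt.mp hd') (by
    have := h.side d.adj
    simp only [Set.mem_ofPred_eq, Fin.lt_def] at hd
    rw [Fin.le_def]
    omega)
  obtain rfl : d.snd = r := π.injective (hk.trans hr.symm)
  exact ⟨d.fst, d.adj.symm, hd⟩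

end NoEdgeCovers

theorem Projective.trans_revPrefix {r : V} (hπ : Projective G r π) :
    Projective G r (π.trans (revPrefix (π r))) := by
  refine ⟨NoEdgeCovers.planar_trans_revPrefix hπ.2 hπ.1, fun u v _ ⟨huv, _⟩ => ?_⟩
  simp only [Fin.lt_def, Equiv.trans_apply, revPrefix_self] at huv
  omega

theorem cost_lt_cost_trans_revPrefix (hG : G.Connected) {r : V}
    (h : NoEdgeCovers G π (π r)) (h₀ : 0 < (π r : ℕ)) (hlast : (π r : ℕ) + 1 < Fintype.card V) :
    cost G π < cost G (π.trans (revPrefix (π r))) := by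
  obtain ⟨v, hrv, hv⟩ := h.exists_adj_gt hG rfl
    (w := π.symm ⟨_, hlast⟩) (by simp [Fin.lt_def])
  refine cost_lt_cost_of_edgeLen_le (fun e he => h.edgeLen_le_trans_revPrefix he)
    ⟨s(r, v), hrv, ?_⟩
  rw [Fin.lt_def] at hv
  simp only [edgeLen_mk, Equiv.trans_apply, revPrefix_val]
  split_ifs <;> omega

theorem root_at_end_of_max_projective_general (n : ℕ)
    (G : SimpleGraph (Fin n)) (hG : G.IsTree) (r : Fin n)
    (π : Fin n ≃ Fin (Fintype.card (Fin n)))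
    (hπ : Projective G r π)
    (hmax : ∀ σ : Fin n ≃ Fin (Fintype.card (Fin n)),
      Projective G r σ → cost G σ ≤ cost G π) :
    (π r : ℕ) = 0 ∨ (π r : ℕ) = n - 1 := by
  by_contra! hmid
  have hlast : (π r : ℕ) + 1 < Fintype.card (Fin n) := by
    have := (π r).isLt
    simp only [Fintype.card_fin] at this ⊢
    omega
  have hlt := cost_lt_cost_trans_revPrefix hG.connected hπ.2 (Nat.pos_of_ne_zero hmid.1) hlast
  exact (hmax _ hπ.trans_revPrefix).not_gt hlt

/-- In a maximum projective arrangement of a rooted tree with `n ≥ 2`, the root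
occupies one end of the arrangement. -/
theorem root_at_end_of_max_projective (n : ℕ) (hn : 2 ≤ n)
    (G : SimpleGraph (Fin n)) (hG : G.IsTree) (r : Fin n)
    (π : Fin n ≃ Fin (Fintype.card (Fin n)))
    (hπ : Projective G r π)
    (hmax : ∀ σ : Fin n ≃ Fin (Fintype.card (Fin n)),
      Projective G r σ → cost G σ ≤ cost G π) :
    (π r : ℕ) = 0 ∨ (π r : ℕ) = n - 1 :=
  root_at_end_of_max_projective_general n G hG r π hπ hmax
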